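/- arXiv:math/0212203 — 2 statements merged into one kernel-verified Lean document; each statement's English description precedes it below -/
import Mathlib

section
/- Let $v_L$ be the monomial valuation on $K=k((X_1,\ldots,X_n))$ associated to a generating set $L=\{B_1,\ldots,B_n\}\subset\mathbf{Z}_{\geq 0}^m\setminus\{0\}$ of $\mathbf{Z}^m$. Let $K_L\subset K$ be the subfield of quotients $f_B/g_B$ of nonzero $L$-homogeneous forms of the same $L$-degree $B$. Then the natural map $K_L\to\Delta_{v_L}$, $f_B/g_B\mapsto f_B/g_B + \mathcal{M}_{v_L}$, is an isomorphism of fields onto the residue field $\Delta_{v_L}$ of $v_L$. -/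
noncomputable instance instLexGrp (m : ℕ) : IsOrderedAddMonoid (Lex (Fin m → ℤ)) :=
  inferInstance

noncomputable instance instLexLinOrd (m : ℕ) : LinearOrder (Lex (Fin m → ℤ)) :=
  inferInstance

noncomputable instance instLexMWZ (m : ℕ) :
    LinearOrderedCommMonoidWithZero (WithZero (Multiplicative (Lex (Fin m → ℤ)))) :=
  (inferInstance : LinearOrderedCommGroupWithZero
    (WithZero (Multiplicative (Lex (Fin m → ℤ))))).toLinearOrderedCommMonoidWithZero

noncomputable def expNeg (m : ℕ) (p : Lex (Fin m → ℤ)) :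
    WithZero (Multiplicative (Lex (Fin m → ℤ))) :=
  (Multiplicative.ofAdd (-p) : Multiplicative (Lex (Fin m → ℤ)))

/-- The `L`-degree of an exponent vector. -/
noncomputable def degL (m n : ℕ) (B : Fin n → (Fin m → ℕ)) (A : Fin n →₀ ℕ) :
    Lex (Fin m → ℤ) :=
  toLex fun j => ∑ i, (A i : ℤ) * (B i j)

/-!
The monomial valuation of a nonzero series is read off its lowest `L`-degree, so a quotient
of two nonzero `L`-forms of the same degree is a unit. The difference of two distinct such
quotients is again one, hence a unit; so the map `K_L → Δ_{v_L}` is well defined and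
injective. For surjectivity write a unit as `a / d`: then `a` and `d` have the same
lowest `L`-degree `p`, and `a / d` is congruent to `a_p / d_p`, the quotient of their
degree-`p` components, because in `a d_p - a_p d` the monomials of degree `2p` cancel.
-/

open MvPowerSeries Pointwise

section expNeg

variable {m : ℕ}

lemma expNeg_ne_zero (p : Lex (Fin m → ℤ)) : expNeg m p ≠ 0 :=
  WithZero.coe_ne_zero

lemma expNeg_add (p q : Lex (Fin m → ℤ)) : expNeg m (p + q) = expNeg m p * expNeg m q := by
  simp only [expNeg, ← WithZero.coe_mul, ← ofAdd_add, neg_add]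

lemma expNeg_strictAnti : StrictAnti (expNeg m) := fun p q h => by
  rw [expNeg, expNeg, WithZero.coe_lt_coe, Multiplicative.ofAdd_lt, neg_lt_neg_iff]
  exact h

end expNeg

lemma algebraMap_div_sub_algebraMap_div {R K : Type*} [CommRing R] [Field K] [Algebra R K]
    [IsFractionRing R K] {f g f' g' : R} (hg : g ≠ 0) (hg' : g' ≠ 0) :
    algebraMap R K f / algebraMap R K g - algebraMap R K f' / algebraMap R K g' =
      algebraMap R K (f * g' - f' * g) / algebraMap R K (g * g') := by
  have hinj := IsFractionRing.injective R K
  rw [div_sub_div _ _ ((map_ne_zero_iff _ hinj).2 hg) ((map_ne_zero_iff _ hinj).2 hg')]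
  simp only [map_mul, map_sub, mul_comm]

section degL

variable {m n : ℕ} (B : Fin n → Fin m → ℕ)

lemma degL_add (A₁ A₂ : Fin n →₀ ℕ) :
    degL m n B (A₁ + A₂) = degL m n B A₁ + degL m n B A₂ := by
  simp only [degL, ← toLex_add]
  congr 1
  funext j
  simp [add_mul, Finset.sum_add_distrib]

lemma degL_monotone : Monotone (degL m n B) := fun _ _ h =>
  Pi.toLex_monotone fun _ => Finset.sum_le_sum fun i _ => by gcongr; exact h i

variable {k : Type*}

section Semiring

variable [Semiring k]

def lDegrees (f : MvPowerSeries (Fin n) k) : Set (Lex (Fin m → ℤ)) :=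
  degL m n B '' {A | coeff A f ≠ 0}

def IsLForm (b : Lex (Fin m → ℤ)) (f : MvPowerSeries (Fin n) k) : Prop :=
  ∀ A, coeff A f ≠ 0 → degL m n B A = b

noncomputable def lHomogeneousComponent (b : Lex (Fin m → ℤ)) (f : MvPowerSeries (Fin n) k) :
    MvPowerSeries (Fin n) k :=
  fun A => if degL m n B A = b then coeff A f else 0

variable {B}

lemma isLForm_iff_lDegrees_subset {b : Lex (Fin m → ℤ)} {f : MvPowerSeries (Fin n) k} :
    IsLForm B b f ↔ lDegrees B f ⊆ {b} :=
  ⟨fun h _ ⟨A, hA, hdeg⟩ => hdeg ▸ h A hA, fun h A hA => h ⟨A, hA, rfl⟩⟩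

lemma exists_isLeast_lDegrees {f : MvPowerSeries (Fin n) k} (hf : f ≠ 0) :
    ∃ p, IsLeast (lDegrees B f) p := by
  have hne : (lDegrees B f).Nonempty :=
    Set.Nonempty.image _ ((ne_zero_iff_exists_coeff_ne_zero f).1 hf)
  have hwf := ((Set.isPWO_of_wellQuasiOrderedLE {A | coeff A f ≠ 0}).image_of_monotone
    (degL_monotone B)).isWF
  exact ⟨hwf.min hne, hwf.min_mem hne, fun _ => hwf.min_le hne⟩

lemma lDegrees_mul_subset (f g : MvPowerSeries (Fin n) k) :
    lDegrees B (f * g) ⊆ lDegrees B f + lDegrees B g := by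
  rintro _ ⟨A, hA : coeff A (f * g) ≠ 0, rfl⟩
  rw [coeff_mul] at hA
  obtain ⟨⟨u, w⟩, huw, hne⟩ := Finset.exists_ne_zero_of_sum_ne_zero hA
  refine ⟨_, ⟨u, left_ne_zero_of_mul hne, rfl⟩, _, ⟨w, right_ne_zero_of_mul hne, rfl⟩,
    ?_⟩
  dsimp only
  rw [← degL_add, Finset.HasAntidiagonal.mem_antidiagonal.1 huw]

lemma coeff_lHomogeneousComponent (b : Lex (Fin m → ℤ)) (f : MvPowerSeries (Fin n) k)
    (A : Fin n →₀ ℕ) :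
    coeff A (lHomogeneousComponent B b f) = if degL m n B A = b then coeff A f else 0 :=
  rfl

lemma isLForm_lHomogeneousComponent (b : Lex (Fin m → ℤ)) (f : MvPowerSeries (Fin n) k) :
    IsLForm B b (lHomogeneousComponent B b f) := fun A hA => by
  by_contra h
  exact hA (if_neg h)

lemma lHomogeneousComponent_ne_zero {b : Lex (Fin m → ℤ)} {f : MvPowerSeries (Fin n) k}
    (hb : b ∈ lDegrees B f) : lHomogeneousComponent B b f ≠ 0 := by
  obtain ⟨A, hA, rfl⟩ := hb
  intro h
  have hcoeff := coeff_lHomogeneousComponent (B := B) (degL m n B A) f A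
  rw [h, map_zero, if_pos rfl] at hcoeff
  exact hA hcoeff.symm

lemma coeff_mul_lHomogeneousComponent_eq {p q : Lex (Fin m → ℤ)}
    (f g : MvPowerSeries (Fin n) k) {A : Fin n →₀ ℕ} (hA : degL m n B A = p + q) :
    coeff A (f * lHomogeneousComponent B q g) = coeff A (lHomogeneousComponent B p f * g) := by
  rw [coeff_mul, coeff_mul]
  refine Finset.sum_congr rfl fun ⟨u, w⟩ huw => ?_
  have hsum : degL m n B u + degL m n B w = p + q := by
    rw [← degL_add, Finset.HasAntidiagonal.mem_antidiagonal.1 huw, hA]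
  have hdeg : degL m n B u = p ↔ degL m n B w = q := by
    constructor <;> intro h <;> rw [h] at hsum
    exacts [add_left_cancel hsum, add_right_cancel hsum]
  simp only [coeff_lHomogeneousComponent, hdeg]
  split_ifs <;> simp

lemma IsLForm.mul {b c : Lex (Fin m → ℤ)} {f g : MvPowerSeries (Fin n) k}
    (hf : IsLForm B b f) (hg : IsLForm B c g) : IsLForm B (b + c) (f * g) := by
  rw [isLForm_iff_lDegrees_subset] at *
  exact (lDegrees_mul_subset f g).trans
    ((Set.add_subset_add hf hg).trans_eq Set.singleton_add_singleton)

lemma IsLForm.isLeast_lDegrees {b : Lex (Fin m → ℤ)} {f : MvPowerSeries (Fin n) k}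
    (hb : IsLForm B b f) (hf : f ≠ 0) : IsLeast (lDegrees B f) b := by
  obtain ⟨A, hA⟩ := (ne_zero_iff_exists_coeff_ne_zero f).1 hf
  exact ⟨⟨A, hA, hb A hA⟩, fun _ ⟨A', hA', hdeg⟩ => (hdeg ▸ hb A' hA').ge⟩

end Semiring

section Ring

variable [Ring k] {B}

lemma lDegrees_sub_subset (f g : MvPowerSeries (Fin n) k) :
    lDegrees B (f - g) ⊆ lDegrees B f ∪ lDegrees B g := by
  rintro _ ⟨A, hA, rfl⟩
  by_cases hf : coeff A f = 0
  · exact Or.inr ⟨A, by simpa [hf] using hA, rfl⟩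
  · exact Or.inl ⟨A, hf, rfl⟩

lemma IsLForm.sub {b : Lex (Fin m → ℤ)} {f g : MvPowerSeries (Fin n) k}
    (hf : IsLForm B b f) (hg : IsLForm B b g) : IsLForm B b (f - g) := by
  rw [isLForm_iff_lDegrees_subset] at *
  exact (lDegrees_sub_subset f g).trans (Set.union_subset hf hg)

lemma lt_of_mem_lDegrees_mul_lHomogeneousComponent_sub {p q : Lex (Fin m → ℤ)}
    {f g : MvPowerSeries (Fin n) k} (hp : p ∈ lowerBounds (lDegrees B f))
    (hq : q ∈ lowerBounds (lDegrees B g)) :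
    ∀ c ∈ lDegrees B (f * lHomogeneousComponent B q g - lHomogeneousComponent B p f * g),
      p + q < c := by
  intro c hc
  have hle : p + q ≤ c := by
    have hform (b : Lex (Fin m → ℤ)) (h : MvPowerSeries (Fin n) k) :
        b ∈ lowerBounds (lDegrees B (lHomogeneousComponent B b h)) := fun _ hc =>
      (isLForm_iff_lDegrees_subset.1 (isLForm_lHomogeneousComponent b h) hc).ge
    rcases lDegrees_sub_subset _ _ hc with hc | hc
    · exact add_mem_lowerBounds_add hp (hform q g) (lDegrees_mul_subset _ _ hc)
    · exact add_mem_lowerBounds_add (hform p f) hq (lDegrees_mul_subset _ _ hc)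
  refine hle.lt_of_ne ?_
  rintro rfl
  obtain ⟨A, hA : coeff A _ ≠ 0, hdeg⟩ := hc
  exact hA (by rw [map_sub, coeff_mul_lHomogeneousComponent_eq f g hdeg, sub_self])

end Ring

end degL

section Valuation

variable {k : Type*} [Field k] {m n : ℕ}

local notation "ι" =>
  algebraMap (MvPowerSeries (Fin n) k) (FractionRing (MvPowerSeries (Fin n) k))

def IsMonomialValuation (B : Fin n → Fin m → ℕ)
    (v : Valuation (FractionRing (MvPowerSeries (Fin n) k))
      (WithZero (Multiplicative (Lex (Fin m → ℤ))))) : Prop :=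
  ∀ f : MvPowerSeries (Fin n) k, f ≠ 0 → ∀ p, IsLeast (lDegrees B f) p →
    v (ι f) = expNeg m p

/-- The subfield `K_L`. -/
def lFormQuotients (B : Fin n → Fin m → ℕ) : Set (FractionRing (MvPowerSeries (Fin n) k)) :=
  {x | ∃ (b : Lex (Fin m → ℤ)) (f g : MvPowerSeries (Fin n) k), f ≠ 0 ∧ g ≠ 0 ∧
    IsLForm B b f ∧ IsLForm B b g ∧ x = ι f / ι g}

variable {B : Fin n → Fin m → ℕ}

lemma sub_mem_lFormQuotients {x y : FractionRing (MvPowerSeries (Fin n) k)}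
    (hx : x ∈ lFormQuotients B) (hy : y ∈ lFormQuotients B) (hxy : x ≠ y) :
    x - y ∈ lFormQuotients B := by
  obtain ⟨b, f, g, hf, hg, hfb, hgb, rfl⟩ := hx
  obtain ⟨c, f', g', hf', hg', hfc, hgc, rfl⟩ := hy
  have hr : f * g' - f' * g ≠ 0 := fun h => hxy <| sub_eq_zero.1 <| by
    rw [algebraMap_div_sub_algebraMap_div hg hg', h, map_zero, zero_div]
  refine ⟨b + c, _, _, hr, mul_ne_zero hg hg', (hfb.mul hgc).sub ?_, hgb.mul hgc,
    algebraMap_div_sub_algebraMap_div hg hg'⟩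
  rw [add_comm]
  exact hfc.mul hgb

namespace IsMonomialValuation

variable {v : Valuation (FractionRing (MvPowerSeries (Fin n) k))
  (WithZero (Multiplicative (Lex (Fin m → ℤ))))} (hv : IsMonomialValuation B v)
include hv

lemma map_of_isLForm {b : Lex (Fin m → ℤ)} {f : MvPowerSeries (Fin n) k} (hf : f ≠ 0)
    (hb : IsLForm B b f) : v (ι f) = expNeg m b :=
  hv f hf b (hb.isLeast_lDegrees hf)

lemma map_lt_of_forall_lt_lDegrees {b : Lex (Fin m → ℤ)} {f : MvPowerSeries (Fin n) k}
    (h : ∀ c ∈ lDegrees B f, b < c) : v (ι f) < expNeg m b := by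
  rcases eq_or_ne f 0 with rfl | hf
  · rw [map_zero, map_zero]
    exact zero_lt_iff.2 (expNeg_ne_zero b)
  obtain ⟨p, hp⟩ := exists_isLeast_lDegrees hf
  rw [hv f hf p hp]
  exact expNeg_strictAnti (h p hp.1)

lemma map_eq_one_of_mem {x : FractionRing (MvPowerSeries (Fin n) k)}
    (hx : x ∈ lFormQuotients B) : v x = 1 := by
  obtain ⟨b, f, g, hf, hg, hfb, hgb, rfl⟩ := hx
  rw [map_div₀, hv.map_of_isLForm hf hfb, hv.map_of_isLForm hg hgb, div_self (expNeg_ne_zero b)]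

lemma eq_of_map_sub_lt_one {x y : FractionRing (MvPowerSeries (Fin n) k)}
    (hx : x ∈ lFormQuotients B) (hy : y ∈ lFormQuotients B) (h : v (x - y) < 1) : x = y := by
  by_contra hxy
  exact h.ne (hv.map_eq_one_of_mem (sub_mem_lFormQuotients hx hy hxy))

lemma exists_mem_map_sub_lt_one {x : FractionRing (MvPowerSeries (Fin n) k)} (hx : v x = 1) :
    ∃ y ∈ lFormQuotients B, v (x - y) < 1 := by
  obtain ⟨a, d, hd, rfl⟩ := IsFractionRing.div_surjective (A := MvPowerSeries (Fin n) k) x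
  have hd0 : d ≠ 0 := nonZeroDivisors.ne_zero hd
  have ha0 : a ≠ 0 := by
    rintro rfl
    simp at hx
  obtain ⟨p, hp⟩ := exists_isLeast_lDegrees (B := B) ha0
  obtain ⟨q, hq⟩ := exists_isLeast_lDegrees (B := B) hd0
  obtain rfl : p = q := expNeg_strictAnti.injective <| by
    rwa [map_div₀, hv a ha0 p hp, hv d hd0 q hq, div_eq_one_iff_eq (expNeg_ne_zero q)] at hx
  set a₀ := lHomogeneousComponent B p a
  set d₀ := lHomogeneousComponent B p d
  have hd₀ : d₀ ≠ 0 := lHomogeneousComponent_ne_zero hq.1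
  refine ⟨ι a₀ / ι d₀, ⟨p, a₀, d₀, lHomogeneousComponent_ne_zero hp.1, hd₀,
    isLForm_lHomogeneousComponent p a, isLForm_lHomogeneousComponent p d, rfl⟩, ?_⟩
  have hden : v (ι (d * d₀)) = expNeg m (p + p) := by
    rw [map_mul, map_mul, hv d hd0 p hq,
      hv.map_of_isLForm hd₀ (isLForm_lHomogeneousComponent p d), expNeg_add]
  rw [algebraMap_div_sub_algebraMap_div hd0 hd₀, map_div₀,
    div_lt_one₀ (hden ▸ zero_lt_iff.2 (expNeg_ne_zero _)), hden]
  exact hv.map_lt_of_forall_lt_lDegrees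
    (lt_of_mem_lDegrees_mul_lHomogeneousComponent_sub hp.2 hq.2)

end IsMonomialValuation

end Valuation

/-- The three conjuncts say that `K_L` lies in the units of the valuation ring, that distinct
elements of `K_L` have distinct residues, and that every residue is the residue of an element
of `K_L`. -/
theorem residue_field_of_monomial_valuation_general (k : Type*) [Field k] (m n : ℕ)
    (B : Fin n → (Fin m → ℕ))
    (v : Valuation (FractionRing (MvPowerSeries (Fin n) k))
      (WithZero (Multiplicative (Lex (Fin m → ℤ)))))
    -- `v` is the monomial valuation associated to `L`:
    (hmono : ∀ f : MvPowerSeries (Fin n) k, f ≠ 0 → ∀ p : Lex (Fin m → ℤ),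
      IsLeast (degL m n B '' {A | MvPowerSeries.coeff A f ≠ 0}) p →
      v (algebraMap (MvPowerSeries (Fin n) k) (FractionRing (MvPowerSeries (Fin n) k)) f) =
        expNeg m p)
    -- `S` is the set of quotients of nonzero `L`-forms of the same `L`-degree:
    (S : Set (FractionRing (MvPowerSeries (Fin n) k)))
    (hS : S = {x | ∃ (b : Lex (Fin m → ℤ)) (f g : MvPowerSeries (Fin n) k), f ≠ 0 ∧ g ≠ 0 ∧
      (∀ A, MvPowerSeries.coeff A f ≠ 0 → degL m n B A = b) ∧
      (∀ A, MvPowerSeries.coeff A g ≠ 0 → degL m n B A = b) ∧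
      x = algebraMap (MvPowerSeries (Fin n) k) (FractionRing (MvPowerSeries (Fin n) k)) f /
        algebraMap (MvPowerSeries (Fin n) k) (FractionRing (MvPowerSeries (Fin n) k)) g}) :
    (∀ x ∈ S, v x = 1) ∧
    (∀ x ∈ S, ∀ y ∈ S, v (x - y) < 1 → x = y) ∧
    (∀ x : FractionRing (MvPowerSeries (Fin n) k), v x = 1 → ∃ y ∈ S, v (x - y) < 1) := by
  subst hS
  exact ⟨fun _ hx => IsMonomialValuation.map_eq_one_of_mem hmono hx,
    fun _ hx _ hy => IsMonomialValuation.eq_of_map_sub_lt_one hmono hx hy,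
    fun _ => IsMonomialValuation.exists_mem_map_sub_lt_one hmono⟩

/-- The residue field of the monomial valuation `v_L` is (isomorphic via the natural map,
i.e. via reduction modulo the maximal ideal `M_{v_L}`, to) the subfield `K_L ⊆ K` of
quotients `f_B/g_B` of nonzero `L`-homogeneous forms of the same `L`-degree `B`:
every element of `K_L` is a unit of the valuation ring, distinct elements of `K_L` have
distinct residues, and every residue is the residue of an element of `K_L`. -/
theorem residue_field_of_monomial_valuation (k : Type*) [Field k] (m n : ℕ)
    (B : Fin n → (Fin m → ℕ)) (hB : ∀ i, B i ≠ 0)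
    (hgen : AddSubgroup.closure (Set.range fun i => fun j => (B i j : ℤ)) = ⊤)
    (v : Valuation (FractionRing (MvPowerSeries (Fin n) k))
      (WithZero (Multiplicative (Lex (Fin m → ℤ)))))
    -- `v` is the monomial valuation associated to `L`:
    (hmono : ∀ f : MvPowerSeries (Fin n) k, f ≠ 0 → ∀ p : Lex (Fin m → ℤ),
      IsLeast (degL m n B '' {A | MvPowerSeries.coeff A f ≠ 0}) p →
      v (algebraMap (MvPowerSeries (Fin n) k) (FractionRing (MvPowerSeries (Fin n) k)) f) =
        expNeg m p)
    -- `S` is the set of quotients of nonzero `L`-forms of the same `L`-degree: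
    (S : Set (FractionRing (MvPowerSeries (Fin n) k)))
    (hS : S = {x | ∃ (b : Lex (Fin m → ℤ)) (f g : MvPowerSeries (Fin n) k), f ≠ 0 ∧ g ≠ 0 ∧
      (∀ A, MvPowerSeries.coeff A f ≠ 0 → degL m n B A = b) ∧
      (∀ A, MvPowerSeries.coeff A g ≠ 0 → degL m n B A = b) ∧
      x = algebraMap (MvPowerSeries (Fin n) k) (FractionRing (MvPowerSeries (Fin n) k)) f /
        algebraMap (MvPowerSeries (Fin n) k) (FractionRing (MvPowerSeries (Fin n) k)) g}) :
    (∀ x ∈ S, v x = 1) ∧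
    (∀ x ∈ S, ∀ y ∈ S, v (x - y) < 1 → x = y) ∧
    (∀ x : FractionRing (MvPowerSeries (Fin n) k), v x = 1 → ∃ y ∈ S, v (x - y) < 1) :=
  residue_field_of_monomial_valuation_general k m n B v hmono S hS
end

section
/- Let $L$ be a field, $L[[Z_1,Z_2]]$ the power series ring, and let $z_1,z_2$ be elements of a complete local $L$-algebra domain that are formally independent over $L$ (i.e., the map $L[[Z_1,Z_2]]\to L[[z_1,z_2]]$ is injective). If $z_2/z_1$ lies in the maximal ideal, then $z_1$ and $z_2/z_1$ are also formally independent over $L$. -/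
/-- The substitution `f(Z₁, Z₂) ↦ f(Z₁, Z₁·Z₂)`, written coefficientwise: the coefficient
of `Z₁^a Z₂^b` in the result is the coefficient of `Z₁^(a-b) Z₂^b` in `f` when `b ≤ a`,
and `0` otherwise. -/
noncomputable def blowSub (L : Type*) [Field L] (f : MvPowerSeries (Fin 2) L) :
    MvPowerSeries (Fin 2) L :=
  fun A : Fin 2 →₀ ℕ =>
    if A 1 ≤ A 0 then
      MvPowerSeries.coeff (Finsupp.single 0 (A 0 - A 1) + Finsupp.single 1 (A 1)) f
    else 0

/-!
Identify `L[[Z₁, Z₂]]` with `L[[Z₁]][[Z₂]]`. The substitution `Z₂ ↦ Z₁ Z₂` becomes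
`rescale Z₁`, whose image consists of the series whose `Z₂^j`-coefficient is divisible by
`Z₁^j`. By Weierstrass preparation over the complete discrete valuation ring `L[[Z₁]]`,
a nonzero `f` is `Z₁^r · g · u` with `u` a unit and `g` a polynomial of some degree `d`
in `Z₂`, so `f · u⁻¹ Z₁^d = Z₁^r · Z₁^d g` lies in that image. Thus if `ψ f = 0`, then `ψ`
kills the nonzero series `blowSub H = f · u⁻¹ Z₁^d`, and formal independence of `z₁, z₂`
forces `H = 0`.
-/

open PowerSeries

/-- The outer variable is `Z₂ = X 1`; the coefficients are power series in `Z₁ = X 0`. -/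
noncomputable def finTwoEquivPowerSeries (L : Type*) [CommSemiring L] :
    MvPowerSeries (Fin 2) L ≃ₐ[L] L⟦X⟧⟦X⟧ :=
  (MvPowerSeries.renameEquiv L ((finSuccEquiv' 1).trans (Equiv.optionCongr finOneEquiv))).trans
    (MvPowerSeries.optionEquivLeft Unit L)

theorem coeff_coeff_finTwoEquivPowerSeries {L : Type*} [CommSemiring L]
    (f : MvPowerSeries (Fin 2) L) (i j : ℕ) :
    coeff i (coeff j (finTwoEquivPowerSeries L f)) =
      MvPowerSeries.coeff (Finsupp.single 0 i + Finsupp.single 1 j) f := by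
  let e : Fin 2 ≃ Option Unit := (finSuccEquiv' 1).trans (Equiv.optionCongr finOneEquiv)
  have hexp : (Finsupp.single () i).optionElim j =
      (Finsupp.single (0 : Fin 2) i + Finsupp.single 1 j).embDomain e.toEmbedding := by
    have he0 : e 0 = some () := rfl
    have he1 : e 1 = none := rfl
    ext o
    rcases o with _ | ⟨⟩
    · rw [← he1, ← Equiv.coe_toEmbedding, Finsupp.embDomain_apply_self, e.coe_toEmbedding, he1]
      simp
    · rw [← he0, ← Equiv.coe_toEmbedding, Finsupp.embDomain_apply_self, e.coe_toEmbedding, he0]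
      simp
  rw [coeff_def (s := Finsupp.single () i) (by simp), finTwoEquivPowerSeries,
    AlgEquiv.trans_apply, MvPowerSeries.coeff_coeff_optionEquivLeft, hexp]
  exact MvPowerSeries.coeff_embDomain_rename _ _ _

theorem finTwoEquivPowerSeries_blowSub {L : Type*} [Field L] (f : MvPowerSeries (Fin 2) L) :
    finTwoEquivPowerSeries L (blowSub L f) = rescale X (finTwoEquivPowerSeries L f) := by
  ext j i
  rw [coeff_coeff_finTwoEquivPowerSeries, coeff_rescale, coeff_X_pow_mul',
    MvPowerSeries.coeff_apply, blowSub]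
  simp only [Finsupp.add_apply, Finsupp.single_apply]
  split_ifs <;> simp_all [coeff_coeff_finTwoEquivPowerSeries]

theorem C_mem_range_rescale {A : Type*} [CommRing A] (a c : A) : C c ∈ (rescale a).range := by
  refine ⟨C c, ext fun n ↦ ?_⟩
  rcases n with _ | n <;> simp [coeff_C]

theorem C_pow_natDegree_mul_mem_range_rescale {A : Type*} [CommRing A] (a : A)
    (p : Polynomial A) :
    C (a ^ p.natDegree) * (p : PowerSeries A) ∈ (rescale a).range := by
  refine ⟨mk fun j ↦ a ^ (p.natDegree - j) * p.coeff j, ext fun j ↦ ?_⟩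
  rw [coeff_rescale, coeff_mk, coeff_C_mul, Polynomial.coeff_coe, ← mul_assoc, ← pow_add]
  rcases le_or_gt j p.natDegree with hj | hj
  · rw [Nat.add_sub_cancel' hj]
  · rw [Polynomial.coeff_eq_zero_of_natDegree_lt hj, mul_zero, mul_zero]

theorem exists_eq_C_X_pow_mul_map_residue_ne_zero {k : Type*} [Field k] {F : k⟦X⟧⟦X⟧}
    (hF : F ≠ 0) :
    ∃ r F', F = C (X ^ r) * F' ∧ F'.map (IsLocalRing.residue k⟦X⟧) ≠ 0 := by
  classical
  have hex : ∃ r j, coeff r (coeff j F) ≠ 0 := by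
    by_contra! h
    exact hF (ext fun j ↦ ext fun r ↦ by simp [h r j])
  obtain ⟨j, hj⟩ := Nat.find_spec hex
  have hdvd : ∀ j, X ^ Nat.find hex ∣ coeff j F := fun j ↦
    X_pow_dvd_iff.mpr fun m hm ↦ by simpa using not_exists.mp (Nat.find_min hex hm) j
  choose c hc using hdvd
  refine ⟨Nat.find hex, mk c, ext fun j ↦ by rw [coeff_C_mul, coeff_mk, ← hc],
    fun h ↦ hj ?_⟩
  have hunit : ¬IsUnit (c j) := by
    rw [← IsLocalRing.residue_ne_zero_iff_isUnit, not_not, ← coeff_mk j c, ← coeff_map, h,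
      map_zero]
  rw [isUnit_iff_constantCoeff, isUnit_iff_ne_zero, not_not] at hunit
  rw [hc, coeff_X_pow_mul', if_pos le_rfl, Nat.sub_self, coeff_zero_eq_constantCoeff, hunit]

theorem exists_mul_mem_range_rescale_X {k : Type*} [Field k] {F : k⟦X⟧⟦X⟧} (hF : F ≠ 0) :
    ∃ H ≠ 0, F * H ∈ (rescale X).range := by
  obtain ⟨r, F', rfl, hF'⟩ := exists_eq_C_X_pow_mul_map_residue_ne_zero hF
  have : IsAdicComplete (IsLocalRing.maximalIdeal k⟦X⟧) k⟦X⟧ := by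
    rw [maximalIdeal_eq_span_X]
    infer_instance
  obtain ⟨g, _, -, ⟨u, rfl⟩, rfl⟩ := F'.exists_isWeierstrassFactorization hF'
  have hC : C (X ^ g.natDegree) ≠ (0 : k⟦X⟧⟦X⟧) :=
    (map_ne_zero_iff _ C_injective).mpr (pow_ne_zero _ X_ne_zero)
  refine ⟨(↑u⁻¹ : k⟦X⟧⟦X⟧) * C (X ^ g.natDegree), mul_ne_zero u⁻¹.ne_zero hC, ?_⟩
  convert mul_mem (C_mem_range_rescale X (X ^ r)) (C_pow_natDegree_mul_mem_range_rescale X g)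
    using 1
  linear_combination (C (X ^ r) * C (X ^ g.natDegree) * (g : k⟦X⟧⟦X⟧)) * u.mul_inv

theorem blowSub_zero {L : Type*} [Field L] : blowSub L 0 = 0 :=
  (finTwoEquivPowerSeries L).injective <| by rw [finTwoEquivPowerSeries_blowSub]; simp

theorem exists_mul_mem_range_blowSub {L : Type*} [Field L] {f : MvPowerSeries (Fin 2) L}
    (hf : f ≠ 0) : ∃ h ≠ 0, f * h ∈ Set.range (blowSub L) := by
  let Φ := finTwoEquivPowerSeries L
  obtain ⟨H, hH, G, hG⟩ :=
    exists_mul_mem_range_rescale_X ((map_ne_zero_iff Φ Φ.injective).mpr hf)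
  refine ⟨Φ.symm H, by simpa using hH, Φ.symm G, Φ.injective ?_⟩
  rw [finTwoEquivPowerSeries_blowSub, Φ.apply_symm_apply, hG, map_mul, Φ.apply_symm_apply]

theorem blowup_preserves_formal_independence_general (L S : Type*) [Field L] [CommRing S]
    [Algebra L S]
    (ψ : MvPowerSeries (Fin 2) L →ₐ[L] S)
    (hindep : Function.Injective fun f : MvPowerSeries (Fin 2) L => ψ (blowSub L f)) :
    Function.Injective ψ := by
  refine (injective_iff_map_eq_zero ψ).mpr fun f hf ↦ by_contra fun hne ↦ ?_
  obtain ⟨h, hh, g, hg⟩ := exists_mul_mem_range_blowSub hne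
  have hg0 : g = 0 := hindep <| by
    simp only [hg, map_mul, hf, zero_mul, blowSub_zero, map_zero]
  exact mul_ne_zero hne hh (by rw [← hg, hg0, blowSub_zero])

/-- Blowing up preserves formal independence: let `S` be a local `L`-algebra domain and
`ψ : L[[Z₁,Z₂]] → S` an evaluation at `(z₁, z₂/z₁)`, with `z₁` and `z₂/z₁` in the maximal
ideal.  If `z₁, z₂ = z₁·(z₂/z₁)` are formally independent over `L` (i.e. the evaluation
`f ↦ f(z₁, z₂) = ψ(f(Z₁, Z₁Z₂))` is injective), then `z₁` and `z₂/z₁` are also formally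
independent over `L` (i.e. `ψ` itself is injective). -/
theorem blowup_preserves_formal_independence (L S : Type*) [Field L] [CommRing S]
    [IsDomain S] [IsLocalRing S] [Algebra L S]
    (ψ : MvPowerSeries (Fin 2) L →ₐ[L] S)
    (hz1 : ψ (MvPowerSeries.X 0) ∈ IsLocalRing.maximalIdeal S)
    (hw : ψ (MvPowerSeries.X 1) ∈ IsLocalRing.maximalIdeal S)
    (hindep : Function.Injective fun f : MvPowerSeries (Fin 2) L => ψ (blowSub L f)) :
    Function.Injective ψ :=
  blowup_preserves_formal_independence_general L S ψ hindep
end
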